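/- arXiv:1408.6694 — 3 statements merged into one kernel-verified Lean document; each statement's English description precedes it below -/
import Mathlib

section
/- For every s ≥ 0, the limit as n → ∞ of P_ddcom(s | λ, μ, ρ, n) := (λρ·exp(λρ(e^{s(λ-μ)}-1)/(n(λ-μ)) + s(λ-μ))) / (n·exp(λρ(e^{s(λ-μ)}-1)/(n(λ-μ))) - n + 1)² equals λρ(λ-μ)²·e^{s(λ-μ)} / (λ - μ - λρ + λρ·e^{s(λ-μ)})². -/
open Real Filter

lemma key_lim (c : ℝ) (hc : 0 ≤ c) :
    Tendsto (fun n : ℝ => n * (Real.exp (c / n) - 1)) atTop (nhds c) := by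
  rcases eq_or_lt_of_le hc with h | h
  · simp [← h, zero_div]
  · have h0 : Tendsto (fun n : ℝ => c / n) atTop (nhdsWithin 0 {x | x ≠ 0}) := by
      apply tendsto_nhdsWithin_of_tendsto_nhds_of_eventually_within
      · exact Tendsto.const_div_atTop tendsto_id c
      · filter_upwards [eventually_gt_atTop (0:ℝ)] with n hn
        exact ne_of_gt (div_pos h hn)
    have hslope : Tendsto (slope Real.exp 0) (nhdsWithin 0 {x | x ≠ 0}) (nhds 1) := by
      have hD := Real.hasDerivAt_exp 0
      rw [hasDerivAt_iff_tendsto_slope] at hD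
      rw [Real.exp_zero] at hD
      exact hD
    have h2 := (hslope.comp h0).const_mul c
    have h3 : Tendsto (fun n : ℝ => n * (Real.exp (c / n) - 1)) atTop (nhds (c * 1)) := by
      refine h2.congr' ?_
      filter_upwards [eventually_gt_atTop (0:ℝ)] with n hn
      have hn' : n ≠ 0 := ne_of_gt hn
      have hc' : c ≠ 0 := ne_of_gt h
      simp only [Function.comp, slope, vsub_eq_sub, Real.exp_zero, sub_zero, smul_eq_mul]
      field_simp
    simpa using h3

/-- For every `s ≥ 0`, the limit as `n → ∞` of
`P_ddcom(s|λ,μ,ρ,n)` equals `λρ(λ-μ)²e^{s(λ-μ)} / (λ-μ-λρ+λρe^{s(λ-μ)})²`. -/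
theorem ddcom_density_limit (lam mu rho : ℝ) (hmu : 0 < mu) (hlam : mu < lam)
    (hrho0 : 0 < rho) (hrho1 : rho ≤ 1) (s : ℝ) (hs : 0 ≤ s) :
    Tendsto (fun n : ℝ =>
        (lam * rho * exp (lam * rho * (exp (s * (lam - mu)) - 1) / (n * (lam - mu))
            + s * (lam - mu))) /
        (n * exp (lam * rho * (exp (s * (lam - mu)) - 1) / (n * (lam - mu))) - n + 1) ^ 2)
      atTop
      (nhds (lam * rho * (lam - mu) ^ 2 * exp (s * (lam - mu)) /
        (lam - mu - lam * rho + lam * rho * exp (s * (lam - mu))) ^ 2)) := by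
  have hd : (0:ℝ) < lam - mu := sub_pos.mpr hlam
  set a := s * (lam - mu) with ha
  have ha0 : 0 ≤ a := mul_nonneg hs hd.le
  have hE1 : (1:ℝ) ≤ exp a := Real.one_le_exp ha0
  have hlr : 0 < lam * rho := mul_pos (hmu.trans hlam) hrho0
  set c := lam * rho * (exp a - 1) / (lam - mu) with hcdef
  have hc : 0 ≤ c := div_nonneg (mul_nonneg hlr.le (by linarith)) hd.le
  have hc1 : (0:ℝ) < c + 1 := by linarith
  have harg : ∀ n : ℝ, lam * rho * (exp a - 1) / (n * (lam - mu)) = c / n := by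
    intro n
    rw [hcdef, div_div, mul_comm (lam - mu) n]
  have hnum : Tendsto (fun n : ℝ => lam * rho * exp (c / n + a)) atTop
      (nhds (lam * rho * exp (0 + a))) := by
    exact (Real.continuous_exp.tendsto _).comp
      ((Tendsto.const_div_atTop tendsto_id c).add_const a) |>.const_mul _
  have hden : Tendsto (fun n : ℝ => (n * (exp (c / n) - 1) + 1) ^ 2) atTop
      (nhds ((c + 1) ^ 2)) := ((key_lim c hc).add_const 1).pow 2
  have main := hnum.div hden (pow_ne_zero 2 (ne_of_gt hc1))
  have hval : lam * rho * exp (0 + a) / (c + 1) ^ 2 =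
      lam * rho * (lam - mu) ^ 2 * exp a /
        (lam - mu - lam * rho + lam * rho * exp a) ^ 2 := by
    have hDeq : lam - mu - lam * rho + lam * rho * exp a = (lam - mu) * (c + 1) := by
      rw [hcdef]; field_simp; ring
    rw [zero_add, hDeq]
    rw [mul_pow, div_mul_eq_div_div_swap]
    rw [eq_div_iff (by positivity)]
    field_simp
  rw [← hval]
  refine main.congr fun n => ?_
  simp only [Pi.div_apply]
  rw [harg n]
  congr 1
  ring
end

section
/- For λ > μ > 0 and 0 < ρ ≤ 1, the expression λρ(λ-μ)²·e^{s(λ-μ)} / (λ - μ - λρ + λρ·e^{s(λ-μ)})² equals 4λρ / (2(1-c₂²) + e^{-c₁ s}(1-c₂)² + e^{c₁ s}(1+c₂)²) for all s ≥ 0, where c₁ = |λ-μ| = λ-μ and c₂ = -(λ - μ - 2λρ)/c₁. -/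
open Real

/-- The large-`n` limit of the doubly deterministic coalescent node-time density equals
the birth-death-sampling marginal density `4λρ/q(s,c₂)`. -/
theorem ddcom_limit_eq_bdm (lam mu rho : ℝ) (hmu : 0 < mu) (hlam : mu < lam)
    (hrho0 : 0 < rho) (hrho1 : rho ≤ 1)
    (c1 c2 : ℝ) (hc1 : c1 = |lam - mu|) (hc2 : c2 = -(lam - mu - 2 * lam * rho) / c1) :
    ∀ s : ℝ, 0 ≤ s →
      lam * rho * (lam - mu) ^ 2 * exp (s * (lam - mu)) /
          (lam - mu - lam * rho + lam * rho * exp (s * (lam - mu))) ^ 2 =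
        4 * lam * rho /
          (2 * (1 - c2 ^ 2) + exp (-c1 * s) * (1 - c2) ^ 2 + exp (c1 * s) * (1 + c2) ^ 2) := by
  intro s hs
  have hd : 0 < lam - mu := by linarith
  have hc1' : c1 = lam - mu := by rw [hc1, abs_of_pos hd]
  subst hc1'
  subst hc2
  set E := exp (s * (lam - mu)) with hEdef
  have hEpos : 0 < E := exp_pos _
  have hE1 : 1 ≤ E := one_le_exp (mul_nonneg hs (le_of_lt hd))
  have h1 : exp (-(lam - mu) * s) = E⁻¹ := by
    rw [hEdef, show -(lam - mu) * s = -(s * (lam - mu)) by ring, exp_neg]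
  have h2 : exp ((lam - mu) * s) = E := by rw [hEdef, mul_comm]
  rw [h1, h2]
  have hlr : 0 < lam * rho := mul_pos (by linarith) hrho0
  have hD : 0 < lam - mu - lam * rho + lam * rho * E := by nlinarith
  have hdne : (lam - mu) ≠ 0 := ne_of_gt hd
  set c := -(lam - mu - 2 * lam * rho) / (lam - mu) with hc
  have hQ : 2 * (1 - c ^ 2) + E⁻¹ * (1 - c) ^ 2 + E * (1 + c) ^ 2 =
      4 * (lam - mu - lam * rho + lam * rho * E) ^ 2 / ((lam - mu) ^ 2 * E) := by
    rw [hc]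
    field_simp
    ring
  rw [hQ]
  rw [div_eq_div_iff (by positivity) (by positivity)]
  field_simp
end

section
/- Given a homochronous sample of proportion ρ ∈ (0,1] from a population with birth rate λ, death rate μ, and λ > μ > 0, for all s ≥ 0: lim_{n→∞} P_ddcom(s | n, λ, μ, ρ) = P_bdm(s | λ, μ, ρ). -/
open Real Filter Topology

/-- For a homochronous sample of proportion `ρ ∈ (0,1]`, `λ > μ > 0`, and all `s ≥ 0`:
`lim_{n→∞} P_ddcom(s|n,λ,μ,ρ) = P_bdm(s|λ,μ,ρ)`. -/
theorem ddcom_tendsto_bdm (lam mu rho : ℝ) (hmu : 0 < mu) (hlam : mu < lam)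
    (hrho0 : 0 < rho) (hrho1 : rho ≤ 1)
    (c1 c2 : ℝ) (hc1 : c1 = lam - mu) (hc2 : c2 = -(lam - mu - 2 * lam * rho) / c1)
    (s : ℝ) (hs : 0 ≤ s) :
    Tendsto (fun n : ℝ =>
        (lam * rho * exp (lam * rho * (exp (s * (lam - mu)) - 1) / (n * (lam - mu))
            + s * (lam - mu))) /
        (n * exp (lam * rho * (exp (s * (lam - mu)) - 1) / (n * (lam - mu))) - n + 1) ^ 2)
      atTop
      (nhds (4 * lam * rho /
        (2 * (1 - c2 ^ 2) + exp (-c1 * s) * (1 - c2) ^ 2 + exp (c1 * s) * (1 + c2) ^ 2))) := by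
  have hd : (0:ℝ) < lam - mu := sub_pos.mpr hlam
  set E := exp (s * (lam - mu)) with hE
  have hEpos : 0 < E := Real.exp_pos _
  have hE1 : 1 ≤ E := Real.one_le_exp (mul_nonneg hs hd.le)
  set K := lam * rho * (E - 1) / (lam - mu) with hK
  have hKnn : 0 ≤ K := by
    apply div_nonneg _ hd.le
    have h : 0 ≤ E - 1 := by linarith
    have hl : (0:ℝ) < lam := hmu.trans hlam
    exact mul_nonneg (mul_nonneg (by linarith) hrho0.le) h
  have harg : ∀ n : ℝ, lam * rho * (E - 1) / (n * (lam - mu)) = K / n := by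
    intro n; rw [hK, mul_comm n, ← div_div]
  -- the key limit : n * (exp (K / n) - 1) → K
  have hmain : Tendsto (fun n : ℝ => n * (exp (K / n) - 1)) atTop (𝓝 K) := by
    rcases eq_or_ne K 0 with h0 | h0
    · simpa [h0] using (tendsto_const_nhds : Tendsto (fun _ : ℝ => (0:ℝ)) atTop (𝓝 0))
    · have hslope : Tendsto (fun y : ℝ => (exp y - 1) / y) (𝓝[≠] (0:ℝ)) (𝓝 1) := by
        have h := hasDerivAt_iff_tendsto_slope.mp (Real.hasDerivAt_exp 0)
        simp only [Real.exp_zero] at h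
        convert h using 2 with y
        simp [slope_def_field]
      have hKn : Tendsto (fun n : ℝ => K / n) atTop (𝓝[≠] (0:ℝ)) := by
        apply tendsto_nhdsWithin_of_tendsto_nhds_of_eventually_within
        · exact tendsto_const_nhds.div_atTop tendsto_id
        · filter_upwards [eventually_gt_atTop (0:ℝ)] with n hn
          exact div_ne_zero h0 hn.ne'
      have hcomp := hslope.comp hKn
      have := (tendsto_const_nhds.mul hcomp :
        Tendsto (fun n : ℝ => K * ((exp (K / n) - 1) / (K / n))) atTop (𝓝 (K * 1)))
      rw [mul_one] at this
      refine this.congr' ?_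
      filter_upwards [eventually_gt_atTop (0:ℝ)] with n hn
      field_simp
  -- numerator limit
  have hnum : Tendsto (fun n : ℝ =>
      lam * rho * exp (lam * rho * (E - 1) / (n * (lam - mu)) + s * (lam - mu)))
      atTop (𝓝 (lam * rho * exp (0 + s * (lam - mu)))) := by
    apply tendsto_const_nhds.mul
    apply (Real.continuous_exp.tendsto _).comp
    apply Tendsto.add_const
    exact tendsto_const_nhds.div_atTop (tendsto_id.atTop_mul_const hd)
  -- denominator limit
  have hden : Tendsto (fun n : ℝ =>
      (n * exp (lam * rho * (E - 1) / (n * (lam - mu))) - n + 1) ^ 2)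
      atTop (𝓝 ((K + 1) ^ 2)) := by
    have h1 : Tendsto (fun n : ℝ =>
        (n * (exp (K / n) - 1) + 1) ^ 2) atTop (𝓝 ((K + 1) ^ 2)) :=
      (hmain.add_const 1).pow 2
    refine h1.congr fun n => ?_
    rw [harg n]; ring
  have hKne : ((K + 1) ^ 2 : ℝ) ≠ 0 := by positivity
  have hlim := hnum.div hden hKne
  have hval : lam * rho * exp (0 + s * (lam - mu)) / (K + 1) ^ 2 =
      4 * lam * rho /
        (2 * (1 - c2 ^ 2) + exp (-c1 * s) * (1 - c2) ^ 2 + exp (c1 * s) * (1 + c2) ^ 2) := by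
    have h1 : exp (-c1 * s) = E⁻¹ := by
      rw [hc1, hE, ← Real.exp_neg]; congr 1; ring
    have h2 : exp (c1 * s) = E := by rw [hc1, hE, mul_comm]
    have h3 : exp (0 + s * (lam - mu)) = E := by rw [zero_add, hE]
    rw [h1, h2, h3, hc2, hc1]
    have hdne : (lam - mu) ≠ 0 := hd.ne'
    have hKp : (0:ℝ) < K + 1 := by linarith [hKnn]
    have hDen : K + 1 ≠ 0 := hKp.ne'
    have hDeq : 2 * (1 - (-(lam - mu - 2 * lam * rho) / (lam - mu)) ^ 2)
        + E⁻¹ * (1 - -(lam - mu - 2 * lam * rho) / (lam - mu)) ^ 2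
        + E * (1 + -(lam - mu - 2 * lam * rho) / (lam - mu)) ^ 2
        = 4 * (K + 1) ^ 2 / E := by
      rw [hK]
      field_simp
      ring
    rw [hDeq, div_div_eq_mul_div]
    field_simp
  rw [← hval]
  exact hlim
end
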